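/- Let p₁, p₂, p₃, p₄ be pairwise distinct primes greater than 3 such that for each i = 1, 2, 3 there exists k_i ∈ ZMod p_i with k_i ≠ 0 for which the elliptic curve y² = x³ + k_i over F_{p_i} has exactly p_{i+1} points (including the point at infinity). If a, b are integers with p₁ = a² + 3b² and a ≡ 2 (mod 3), then p₄ = (a + 2)² + 3b². -/

import Mathlib

/-- The number of `F_p`-rational points, including the point at infinity, of the elliptic curve
`y² = x³ + k` over `F_p`. -/
noncomputable def Npts (p : ℕ) (k : ZMod p) : ℕ :=
  Nat.card (WeierstrassCurve.Affine.Point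
    (WeierstrassCurve.toAffine ⟨0, 0, 0, 0, k⟩))

/-!
If `p ≡ 2 (mod 3)`, cubing permutes `F_p`, so `y² = x³ + k` has `p + 1` points and the next entry
of the list would be even. If `p ≡ 1 (mod 3)`, counting the fibres of `x ↦ x³` with a cubic
character `ψ` writes the trace `t = #E(F_p) - p - 1` as `z + z̄`, where
`z = ψ(-k) χ(k) J(ψ, χ)` (`χ` quadratic, `J` the Jacobi sum) has norm `p` and lies in `ℤ[ζ₆]`;
hence `4p = t² + 3s²`. Primality of the next entry `q = p + 1 + t` gives `t` odd and
`t ≡ 2 (mod 3)`, and uniqueness of the representation `p = a² + 3b²` then forces `t = a ± 3b`.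
The new entry `q` has the representation `((a - 3b - 1)/2)² + 3((a + b + 1)/2)²`, for which the
sign `-` would lead back to `p`; since the list has no repetitions the sign is `+` from the second
step on, and adding up the three traces gives `p₄ = p₁ + 4a + 4`.
-/

open Finset Function ComplexConjugate WeierstrassCurve.Affine

section PointCount

variable {F : Type*} [Field F]

abbrev mordellCurve (k : F) : WeierstrassCurve.Affine F :=
  WeierstrassCurve.toAffine ⟨0, 0, 0, 0, k⟩

lemma natCast_ne_zero_of_ringChar_ne {n : ℕ} (hn : n.Prime) (h : ringChar F ≠ n) :
    (n : F) ≠ 0 := by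
  rw [Ne, ringChar.spec]
  exact fun hdvd ↦ h ((hn.eq_one_or_self_of_dvd _ hdvd).resolve_left CharP.ringChar_ne_one)

lemma mordell_equation_iff (k x y : F) :
    (mordellCurve k).Equation x y ↔ y ^ 2 = x ^ 3 + k := by
  simp [equation_iff]

lemma mordell_Δ_ne_zero (hF2 : ringChar F ≠ 2) (hF3 : ringChar F ≠ 3) {k : F} (hk : k ≠ 0) :
    (mordellCurve k).Δ ≠ 0 := by
  have h2 := natCast_ne_zero_of_ringChar_ne Nat.prime_two hF2
  have h3 := natCast_ne_zero_of_ringChar_ne Nat.prime_three hF3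
  have hΔ : (mordellCurve k).Δ = -(2 ^ 4 * 3 ^ 3 * k ^ 2) := by
    simp only [WeierstrassCurve.Δ, WeierstrassCurve.b₂, WeierstrassCurve.b₄, WeierstrassCurve.b₆,
      WeierstrassCurve.b₈]
    ring
  push_cast at h2 h3
  rw [hΔ]
  exact neg_ne_zero.2 (by positivity)

lemma card_mordell_point [Fintype F] [DecidableEq F] (hF2 : ringChar F ≠ 2)
    (hF3 : ringChar F ≠ 3) {k : F} (hk : k ≠ 0) :
    (Nat.card (mordellCurve k).Point : ℤ) =
      Fintype.card F + 1 + ∑ x : F, quadraticChar F (x ^ 3 + k) := by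
  have hnonsing (xy : F × F) :
      (mordellCurve k).Nonsingular xy.1 xy.2 ↔ xy.2 ^ 2 = xy.1 ^ 3 + k := by
    rw [← equation_iff_nonsingular_of_Δ_ne_zero (mordell_Δ_ne_zero hF2 hF3 hk),
      mordell_equation_iff]
  have hsqrt (x : F) : (#{y : F | y ^ 2 = x ^ 3 + k} : ℤ) = quadraticChar F (x ^ 3 + k) + 1 := by
    rw [← quadraticChar_card_sqrts hF2]
    congr 2
    ext; simp
  rw [Nat.card_congr ((mordellCurve k).nonsingularPointEquiv.trans
      (Equiv.subtypeEquivRight hnonsing).optionCongr), Nat.card_eq_fintype_card,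
    Fintype.card_option, Fintype.card_subtype, card_filter, Fintype.sum_prod_type]
  simp only [← card_filter]
  push_cast
  rw [sum_congr rfl fun x _ ↦ hsqrt x, sum_add_distrib]
  simp only [sum_const, card_univ, Int.nsmul_eq_mul, mul_one]
  ring

end PointCount

section CharacterSums

variable {F : Type*} [Field F] [Fintype F]

lemma pow_bijective_of_coprime {n : ℕ} (hn0 : n ≠ 0) (hn : (Fintype.card F - 1).Coprime n) :
    Bijective fun x : F ↦ x ^ n := by
  refine Finite.injective_iff_bijective.mp fun x y hxy ↦ ?_
  rcases eq_or_ne x 0 with rfl | hx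
  · exact (pow_eq_zero_iff hn0).mp (by rw [← hxy, zero_pow hn0]) |>.symm
  have hy : y ≠ 0 := by rintro rfl; exact hx (pow_eq_zero_iff hn0 |>.mp (hxy.trans (zero_pow hn0)))
  have hunits : (Nat.card Fˣ).Coprime n := by rwa [Nat.card_units, Nat.card_eq_fintype_card]
  have := (Nat.Coprime.pow_left_bijective hunits).injective
    (a₁ := Units.mk0 x hx) (a₂ := Units.mk0 y hy) (Units.ext (by simpa using hxy))
  simpa using congrArg Units.val this

lemma MulChar.exists_pow_eq_of_apply_eq_one {R : Type*} [CommMonoidWithZero R]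
    {ψ : MulChar F R} {n : ℕ} (hψ : orderOf ψ = n) {u : F} (hu : u ≠ 0) (h : ψ u = 1) :
    ∃ v, v ^ n = u := by
  obtain ⟨g, hg⟩ := IsCyclic.exists_generator (α := Fˣ)
  obtain ⟨j, hj⟩ : ∃ j : ℕ, g ^ j = Units.mk0 u hu :=
    mem_powers_iff_mem_zpowers.mpr (hg (Units.mk0 u hu))
  have hgj : ψ (g : F) ^ j = 1 := by
    rw [← map_pow, ← Units.val_pow_eq_pow_val, hj, Units.val_mk0, h]
  have hψj : ψ ^ j = 1 := by
    refine MulChar.eq_one_iff.mpr fun a ↦ ?_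
    obtain ⟨i, rfl⟩ := mem_powers_iff_mem_zpowers.mpr (hg a)
    rw [MulChar.pow_apply_coe, Units.val_pow_eq_pow_val, map_pow, ← pow_mul, mul_comm, pow_mul,
      hgj, one_pow]
  obtain ⟨i, rfl⟩ := hψ ▸ orderOf_dvd_of_pow_eq_one hψj
  refine ⟨(g : F) ^ i, ?_⟩
  rw [← pow_mul, mul_comm, ← Units.val_pow_eq_pow_val, hj, Units.val_mk0]

lemma sum_quadraticChar_pow_three_add_eq_zero [DecidableEq F] (hF2 : ringChar F ≠ 2)
    (hF : Fintype.card F % 3 = 2) (k : F) :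
    ∑ x : F, quadraticChar F (x ^ 3 + k) = 0 := by
  have hcop : (Fintype.card F - 1).Coprime 3 :=
    ((Nat.Prime.coprime_iff_not_dvd Nat.prime_three).2 (by omega)).symm
  calc ∑ x : F, quadraticChar F (x ^ 3 + k)
      = ∑ u : F, quadraticChar F (u + k) :=
        (pow_bijective_of_coprime three_ne_zero hcop).sum_comp (quadraticChar F <| · + k)
    _ = ∑ u : F, quadraticChar F u := Equiv.sum_comp (Equiv.addRight k) (quadraticChar F ·)
    _ = 0 := quadraticChar_sum_zero hF2

lemma card_filter_pow_three_eq [DecidableEq F] (ψ : MulChar F ℂ) (hψ : orderOf ψ = 3) (u : F) :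
    (#{x : F | x ^ 3 = u} : ℂ) = 1 + ψ u + ψ u ^ 2 := by
  rcases eq_or_ne u 0 with rfl | hu
  · simp [pow_eq_zero_iff, filter_eq', MulChar.map_zero]
  have hψ3 : ψ ^ 3 = 1 := hψ ▸ pow_orderOf_eq_one ψ
  have hcube_one {v : F} (hv : v ≠ 0) : ψ v ^ 3 = 1 := by
    rw [← MulChar.pow_apply' ψ three_ne_zero, hψ3, MulChar.one_apply hv.isUnit]
  have : Fact (Nat.Prime 3) := ⟨Nat.prime_three⟩
  obtain ⟨ζ, hζ⟩ := exists_prime_orderOf_dvd_card (G := Fˣ) 3 <| by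
    rw [Fintype.card_units, ← hψ]; exact MulChar.orderOf_dvd_card_sub_one F ψ
  have hζ : IsPrimitiveRoot (ζ : F) 3 := IsPrimitiveRoot.coe_units_iff.mpr (hζ ▸ .orderOf ζ)
  have hroots : ({x : F | x ^ 3 = u} : Finset F) = (Polynomial.nthRoots 3 u).toFinset := by
    ext; simp [Polynomial.mem_nthRoots]
  rw [hroots, Multiset.toFinset_card_of_nodup (hζ.nthRoots_nodup hu), hζ.card_nthRoots]
  split_ifs with hcube
  · obtain ⟨v, rfl⟩ := hcube
    rw [map_pow, hcube_one (pow_ne_zero_iff three_ne_zero |>.mp hu)]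
    norm_num
  · have hne : ψ u ≠ 1 := fun h ↦ hcube (ψ.exists_pow_eq_of_apply_eq_one hψ hu h)
    rw [Nat.cast_zero]
    refine (mul_left_cancel₀ (sub_ne_zero.mpr hne) ?_)
    linear_combination -hcube_one hu

lemma sum_mul_apply_add_eq_jacobiSum {R : Type*} [CommRing R] (φ χ : MulChar F R) {k : F}
    (hk : k ≠ 0) : ∑ u : F, φ u * χ (u + k) = φ (-k) * χ k * jacobiSum φ χ := by
  rw [jacobiSum, mul_sum, ← Equiv.sum_comp (Equiv.mulLeft₀ (-k) (neg_ne_zero.mpr hk))]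
  refine sum_congr rfl fun x _ ↦ ?_
  rw [Equiv.mulLeft₀_apply, show -k * x + k = k * (1 - x) by ring, map_mul, map_mul]
  ring

lemma sum_apply_pow_three_add_eq {ψ χ : MulChar F ℂ} (hψ : orderOf ψ = 3) (hχ : χ ≠ 1) {k : F}
    (hk : k ≠ 0) : ∑ x : F, χ (x ^ 3 + k) =
      ψ (-k) * χ k * jacobiSum ψ χ + ψ⁻¹ (-k) * χ k * jacobiSum ψ⁻¹ χ := by
  classical
  have hψ3 : ψ ^ 3 = 1 := hψ ▸ pow_orderOf_eq_one ψ
  have hψinv : ψ⁻¹ = ψ ^ 2 := inv_eq_of_mul_eq_one_right (by rw [← pow_succ', hψ3])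
  have hshift : ∑ u : F, χ (u + k) = 0 :=
    (Equiv.sum_comp (Equiv.addRight k) χ).trans (MulChar.sum_eq_zero_of_ne_one hχ)
  calc ∑ x : F, χ (x ^ 3 + k)
      = ∑ u : F, ∑ x with x ^ 3 = u, χ (u + k) := (sum_fiberwise' univ (· ^ 3) (χ <| · + k)).symm
    _ = ∑ u : F, (1 + ψ u + ψ u ^ 2) * χ (u + k) := by
      simp_rw [sum_const, nsmul_eq_mul, card_filter_pow_three_eq ψ hψ]
    _ = ∑ u : F, χ (u + k) + ∑ u : F, ψ u * χ (u + k) + ∑ u : F, ψ⁻¹ u * χ (u + k) := by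
      rw [← sum_add_distrib, ← sum_add_distrib, hψinv]
      refine sum_congr rfl fun u _ ↦ ?_
      rw [MulChar.pow_apply' ψ two_ne_zero]
      ring
    _ = _ := by rw [hshift, zero_add, sum_mul_apply_add_eq_jacobiSum _ _ hk,
      sum_mul_apply_add_eq_jacobiSum _ _ hk]

lemma conj_apply_mul_apply_mul_jacobiSum (ψ χ : MulChar F ℂ) (a b : F) :
    conj (ψ a * χ b * jacobiSum ψ χ) = ψ⁻¹ a * χ⁻¹ b * jacobiSum ψ⁻¹ χ⁻¹ := by
  rw [map_mul, map_mul, ← jacobiSum_ringHomComp, ← MulChar.star_eq_inv, ← MulChar.star_eq_inv]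
  rfl

lemma apply_mul_apply_mul_jacobiSum_mul_conj {ψ χ : MulChar F ℂ} (hψ : ψ ≠ 1) (hχ : χ ≠ 1)
    (hψχ : ψ * χ ≠ 1) {a b : F} (ha : a ≠ 0) (hb : b ≠ 0) :
    ψ a * χ b * jacobiSum ψ χ * conj (ψ a * χ b * jacobiSum ψ χ) = Fintype.card F := by
  have hchar : ringChar ℂ ≠ ringChar F := by
    rw [ringChar.eq_zero]; exact (CharP.ringChar_ne_zero_of_finite F).symm
  have hinv {φ : MulChar F ℂ} {c : F} (hc : c ≠ 0) : φ c * φ⁻¹ c = 1 := by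
    rw [← MulChar.mul_apply, mul_inv_cancel, MulChar.one_apply hc.isUnit]
  rw [conj_apply_mul_apply_mul_jacobiSum,
    ← jacobiSum_mul_jacobiSum_inv hchar hψ hχ hψχ]
  linear_combination (jacobiSum ψ χ * jacobiSum ψ⁻¹ χ⁻¹) *
    (χ b * χ⁻¹ b * hinv (φ := ψ) ha + hinv (φ := χ) hb)

lemma exists_add_conj_eq_and_mul_conj_eq {μ : ℂ} (hμ : IsPrimitiveRoot μ 6) {z : ℂ}
    (hz : z ∈ Algebra.adjoin ℤ {μ}) :
    ∃ m n : ℤ, z + conj z = 2 * m + n ∧ z * conj z = m ^ 2 + m * n + n ^ 2 := by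
  have hμ_sq : μ ^ 2 = μ - 1 := by
    have := (hμ.isRoot_cyclotomic (by norm_num)).eq_zero
    rw [Polynomial.cyclotomic_six] at this
    simp only [Polynomial.eval_add, Polynomial.eval_sub, Polynomial.eval_pow, Polynomial.eval_X,
      Polynomial.eval_one] at this
    linear_combination this
  have hconj : conj μ = 1 - μ := by
    rw [← Complex.inv_eq_conj (hμ.norm'_eq_one (by norm_num))]
    refine inv_eq_of_mul_eq_one_right ?_
    linear_combination -hμ_sq
  obtain ⟨m, n, rfl⟩ : ∃ m n : ℤ, z = m + n * μ := by
    induction hz using Algebra.adjoin_induction with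
    | mem x hx => exact ⟨0, 1, by simp [Set.mem_singleton_iff.mp hx]⟩
    | algebraMap r => exact ⟨r, 0, by simp⟩
    | add x y _ _ hx hy =>
      obtain ⟨m₁, n₁, rfl⟩ := hx
      obtain ⟨m₂, n₂, rfl⟩ := hy
      exact ⟨m₁ + m₂, n₁ + n₂, by push_cast; ring⟩
    | mul x y _ _ hx hy =>
      obtain ⟨m₁, n₁, rfl⟩ := hx
      obtain ⟨m₂, n₂, rfl⟩ := hy
      exact ⟨m₁ * m₂ - n₁ * n₂, m₁ * n₂ + n₁ * m₂ + n₁ * n₂, by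
        push_cast; linear_combination (n₁ * n₂ : ℂ) * hμ_sq⟩
  refine ⟨m, n, ?_, ?_⟩
  · simp only [map_add, map_mul, map_intCast, hconj]; ring
  · simp only [map_add, map_mul, map_intCast, hconj]; linear_combination (-(n : ℂ) ^ 2) * hμ_sq

lemma mul_ne_one_of_orderOf_eq_three_of_sq_eq_one {G : Type*} [Group G] {x y : G}
    (hx : orderOf x = 3) (hy : y ^ 2 = 1) : x * y ≠ 1 := fun h ↦ by
  have := orderOf_dvd_of_pow_eq_one (x := x) (n := 2) <| by
    rw [eq_inv_of_mul_eq_one_left h, inv_pow, hy, inv_one]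
  rw [hx] at this
  norm_num at this

lemma exists_four_mul_card_eq_sq_add_three_mul_sq [DecidableEq F] (hF2 : ringChar F ≠ 2)
    (hF : Fintype.card F % 3 = 1) {k : F} (hk : k ≠ 0) :
    ∃ s : ℤ, 4 * (Fintype.card F : ℤ) =
      (∑ x : F, quadraticChar F (x ^ 3 + k)) ^ 2 + 3 * s ^ 2 := by
  have hμ₃ := Complex.isPrimitiveRoot_exp 3 (by norm_num)
  have hμ₆ := Complex.isPrimitiveRoot_exp 6 (by norm_num)
  obtain ⟨ψ, hψ⟩ := MulChar.exists_mulChar_orderOf F (by omega) hμ₃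
  set χ := (quadraticChar F).ringHomComp (Int.castRingHom ℂ)
  have hχ : χ ≠ 1 :=
    (MulChar.ringHomComp_ne_one_iff (RingHom.injective_int _)).mpr (quadraticChar_ne_one hF2)
  have hχinv : χ⁻¹ = χ := ((quadraticChar_isQuadratic F).comp _).inv
  have hχ₆ : χ ^ 6 = 1 := by
    rw [show 6 = 2 * 3 by rfl, pow_mul, ((quadraticChar_isQuadratic F).comp _).sq_eq_one, one_pow]
  have hψ₆ : ψ ^ 6 = 1 := orderOf_dvd_iff_pow_eq_one.mp (by rw [hψ]; norm_num)
  have hψ1 : ψ ≠ 1 := by rintro rfl; simp at hψ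
  have hψχ : ψ * χ ≠ 1 :=
    mul_ne_one_of_orderOf_eq_three_of_sq_eq_one hψ ((quadraticChar_isQuadratic F).comp _).sq_eq_one
  set z := ψ (-k) * χ k * jacobiSum ψ χ
  have hsum : ((∑ x : F, quadraticChar F (x ^ 3 + k) : ℤ) : ℂ) = z + conj z := by
    rw [conj_apply_mul_apply_mul_jacobiSum, hχinv, ← sum_apply_pow_three_add_eq hψ hχ hk]
    push_cast
    rfl
  have hnorm : z * conj z = Fintype.card F :=
    apply_mul_apply_mul_jacobiSum_mul_conj hψ1 hχ hψχ (neg_ne_zero.mpr hk) hk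
  have hz : z ∈ Algebra.adjoin ℤ {Complex.exp (2 * Real.pi * Complex.I / 6)} :=
    mul_mem (mul_mem (MulChar.apply_mem_algebraAdjoin_of_pow_eq_one hψ₆ hμ₆ _)
      (MulChar.apply_mem_algebraAdjoin_of_pow_eq_one hχ₆ hμ₆ _))
      (jacobiSum_mem_algebraAdjoin_of_pow_eq_one hψ₆ hχ₆ hμ₆)
  obtain ⟨m, n, htrace, hnorm'⟩ := exists_add_conj_eq_and_mul_conj_eq hμ₆ hz
  have htrace : ∑ x : F, quadraticChar F (x ^ 3 + k) = 2 * m + n := by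
    exact_mod_cast hsum.trans htrace
  have hcard : (Fintype.card F : ℤ) = m ^ 2 + m * n + n ^ 2 := by
    exact_mod_cast hnorm.symm.trans hnorm'
  exact ⟨n, by rw [htrace, hcard]; ring⟩

end CharacterSums

lemma sq_eq_sq_of_dvd_mul_sub_mul {P a b c d : ℤ} (hP : P ≠ 0) (h₁ : a ^ 2 + 3 * b ^ 2 = P)
    (h₂ : c ^ 2 + 3 * d ^ 2 = P) (hdvd : P ∣ a * d - b * c) : a ^ 2 = c ^ 2 := by
  obtain ⟨e, he⟩ := hdvd
  have hid : (a * c + 3 * b * d) ^ 2 + 3 * (P * e) ^ 2 = P ^ 2 := by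
    linear_combination (c ^ 2 + 3 * d ^ 2) * h₁ + P * h₂ - 3 * (a * d - b * c + P * e) * he
  have hcross : a * d = b * c := by
    obtain rfl : e = 0 := by
      by_contra he0
      nlinarith [sq_nonneg (a * c + 3 * b * d), sq_pos_of_ne_zero hP, sq_pos_of_ne_zero he0]
    linarith
  refine mul_right_cancel₀ hP ?_
  linear_combination c ^ 2 * h₁ - a ^ 2 * h₂ + 3 * (a * d + b * c) * hcross

lemma sq_eq_sq_of_sq_add_three_mul_sq_eq_prime {P a b c d : ℤ} (hP : Prime P)
    (h₁ : a ^ 2 + 3 * b ^ 2 = P) (h₂ : c ^ 2 + 3 * d ^ 2 = P) : a ^ 2 = c ^ 2 := by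
  have hdvd : P ∣ (a * d - b * c) * (a * -d - b * c) :=
    ⟨b ^ 2 - d ^ 2, by linear_combination b ^ 2 * h₂ - d ^ 2 * h₁⟩
  rcases hP.dvd_or_dvd hdvd with h | h
  · exact sq_eq_sq_of_dvd_mul_sub_mul hP.ne_zero h₁ h₂ h
  · exact sq_eq_sq_of_dvd_mul_sub_mul hP.ne_zero h₁ (by rwa [neg_sq]) h

lemma exists_sq_add_three_mul_sq_of_four_mul_eq {P t s : ℤ} (h : 4 * P = t ^ 2 + 3 * s ^ 2)
    (ht : t % 2 = 1) : ∃ c d : ℤ, P = c ^ 2 + 3 * d ^ 2 ∧ t = c + 3 * d := by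
  have hs : s % 2 = 1 := by
    have hmod : (t ^ 2 + 3 * s ^ 2) % 4 = 0 := by omega
    rcases (by omega : t % 4 = 1 ∨ t % 4 = 3) with h1 | h1 <;>
      rcases (by omega : s % 4 = 0 ∨ s % 4 = 1 ∨ s % 4 = 2 ∨ s % 4 = 3) with h2 | h2 | h2 | h2 <;>
      simp [pow_two, Int.add_emod, Int.mul_emod, h1, h2] at hmod ⊢ <;> omega
  obtain ⟨σ, hσ, c, hc⟩ : ∃ σ : ℤ, σ ^ 2 = s ^ 2 ∧ 4 ∣ t + 3 * σ := by
    rcases (by omega : 4 ∣ t + 3 * s ∨ 4 ∣ t + 3 * -s) with h4 | h4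
    · exact ⟨s, rfl, h4⟩
    · exact ⟨-s, neg_sq s, h4⟩
  refine ⟨c, c - σ, ?_, by linarith⟩
  have : 4 * P = 4 * (c ^ 2 + 3 * (c - σ) ^ 2) := by
    linear_combination h + (t + 4 * c - 3 * σ) * hc - 3 * hσ
  linarith

lemma eq_add_or_eq_sub_of_four_mul_eq {P a b t s : ℤ} (hP : Prime P)
    (hab : P = a ^ 2 + 3 * b ^ 2) (ha : a % 3 = 2) (h : 4 * P = t ^ 2 + 3 * s ^ 2)
    (ht₂ : t % 2 = 1) (ht₃ : t % 3 = 2) : t = a + 3 * b ∨ t = a - 3 * b := by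
  obtain ⟨c, d, hcd, rfl⟩ := exists_sq_add_three_mul_sq_of_four_mul_eq h ht₂
  have hac := sq_eq_sq_of_sq_add_three_mul_sq_eq_prime hP hab.symm hcd.symm
  have hbd : b ^ 2 = d ^ 2 := by linarith
  rcases sq_eq_sq_iff_eq_or_eq_neg.mp hac with rfl | rfl
  · rcases sq_eq_sq_iff_eq_or_eq_neg.mp hbd with rfl | rfl
    · exact .inl rfl
    · exact .inr (by ring)
  · omega

lemma exists_sq_add_three_mul_sq_of_eq_add {P Q a b : ℤ} (hP : P % 2 = 1)
    (hab : P = a ^ 2 + 3 * b ^ 2) (ha : a % 3 = 2) (hQ : Q = P + 1 + a + 3 * b) :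
    ∃ x y : ℤ, Q = x ^ 2 + 3 * y ^ 2 ∧ x % 3 = 2 ∧ 2 * x = a - 3 * b - 1 ∧ 2 * y = a + b + 1 := by
  have hpar : (a + b) % 2 = 1 := by
    have hmod : (a ^ 2 + 3 * b ^ 2) % 2 = 1 := hab ▸ hP
    rcases Int.emod_two_eq a with ha | ha <;> rcases Int.emod_two_eq b with hb | hb <;>
      simp [pow_two, Int.add_emod, Int.mul_emod, ha, hb] at hmod ⊢
  obtain ⟨x, hx⟩ : ∃ x, a - 3 * b - 1 = 2 * x := ⟨(a - 3 * b - 1) / 2, by omega⟩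
  obtain ⟨y, hy⟩ : ∃ y, a + b + 1 = 2 * y := ⟨(a + b + 1) / 2, by omega⟩
  refine ⟨x, y, ?_, by omega, hx.symm, hy.symm⟩
  have : 4 * Q = 4 * (x ^ 2 + 3 * y ^ 2) := by
    linear_combination 4 * hQ + 4 * hab + (a - 3 * b - 1 + 2 * x) * hx
      + 3 * (a + b + 1 + 2 * y) * hy
  linarith

lemma Nat.Prime.mod_three_ne_zero {p : ℕ} (hp : p.Prime) (h3 : 3 < p) : p % 3 ≠ 0 := fun h0 ↦ by
  have := (Nat.prime_dvd_prime_iff_eq Nat.prime_three hp).mp (Nat.dvd_of_mod_eq_zero h0)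
  omega

def IsEllipticPair (p q : ℕ) : Prop :=
  ∃ k : ZMod p, k ≠ 0 ∧ Npts p k = q

lemma IsEllipticPair.exists_four_mul_eq {p q : ℕ} (h : IsEllipticPair p q) (hp : p.Prime)
    (hq : q.Prime) (hp3 : 3 < p) (hq3 : 3 < q) :
    ∃ t s : ℤ, (q : ℤ) = p + 1 + t ∧ 4 * (p : ℤ) = t ^ 2 + 3 * s ^ 2 ∧ t % 2 = 1 ∧ t % 3 = 2 := by
  have := Fact.mk hp
  obtain ⟨k, hk, rfl⟩ := h
  have hchar : ringChar (ZMod p) = p := ZMod.ringChar_zmod_n p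
  have hcount := card_mordell_point (F := ZMod p) (by omega) (by omega) hk
  rw [ZMod.card] at hcount
  change (Npts p k : ℤ) = _ at hcount
  have hp2 := hp.mod_two_eq_one_iff_ne_two.mpr (by omega)
  have hq2 := hq.mod_two_eq_one_iff_ne_two.mpr (by omega)
  have hq3' := hq.mod_three_ne_zero hq3
  have hp3' : p % 3 = 1 := by
    have := hp.mod_three_ne_zero hp3
    -- otherwise the trace vanishes and `q = p + 1` is even
    have : p % 3 ≠ 2 := fun h2 ↦ by
      have := sum_quadraticChar_pow_three_add_eq_zero (F := ZMod p) (by omega)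
        (by rwa [ZMod.card]) k
      omega
    omega
  obtain ⟨s, hs⟩ := exists_four_mul_card_eq_sq_add_three_mul_sq (F := ZMod p) (by omega)
    (by rwa [ZMod.card]) hk
  rw [ZMod.card] at hs
  refine ⟨_, s, hcount, hs, by omega, ?_⟩
  set t := ∑ x : ZMod p, quadraticChar (ZMod p) (x ^ 3 + k)
  have ht : t ^ 2 % 3 = 1 := by omega
  rcases (by omega : t % 3 = 0 ∨ t % 3 = 1 ∨ t % 3 = 2) with h | h | h <;>
    simp [pow_two, Int.mul_emod, h] at ht <;> omega

lemma IsEllipticPair.eq_add_or_eq_sub {p q : ℕ} (h : IsEllipticPair p q) (hp : p.Prime)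
    (hq : q.Prime) (hp3 : 3 < p) (hq3 : 3 < q) {a b : ℤ} (hab : (p : ℤ) = a ^ 2 + 3 * b ^ 2)
    (ha : a % 3 = 2) : (q : ℤ) = p + 1 + a + 3 * b ∨ (q : ℤ) = p + 1 + a - 3 * b := by
  obtain ⟨t, s, hq, hs, ht₂, ht₃⟩ := h.exists_four_mul_eq hp hq hp3 hq3
  rcases eq_add_or_eq_sub_of_four_mul_eq (Nat.prime_iff_prime_int.mp hp) hab ha hs ht₂ ht₃
    with rfl | rfl
  · exact .inl (by rw [hq]; ring)
  · exact .inr (by rw [hq]; ring)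

lemma IsEllipticPair.eq_add_of_ne {p q r : ℕ} (h : IsEllipticPair q r) (hp : p % 2 = 1)
    (hq : q.Prime) (hr : r.Prime) (hq3 : 3 < q) (hr3 : 3 < r) (hrp : r ≠ p) {a b : ℤ}
    (hab : (p : ℤ) = a ^ 2 + 3 * b ^ 2) (ha : a % 3 = 2) (hpq : (q : ℤ) = p + 1 + a + 3 * b) :
    ∃ x y : ℤ, (q : ℤ) = x ^ 2 + 3 * y ^ 2 ∧ x % 3 = 2 ∧ 2 * x = a - 3 * b - 1 ∧
      2 * y = a + b + 1 ∧ (r : ℤ) = q + 1 + x + 3 * y := by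
  obtain ⟨x, y, hxy, hx, hx_def, hy_def⟩ :=
    exists_sq_add_three_mul_sq_of_eq_add (by omega) hab ha hpq
  refine ⟨x, y, hxy, hx, hx_def, hy_def, ?_⟩
  rcases h.eq_add_or_eq_sub hq hr hq3 hr3 hxy hx with hr | hr
  · exact hr
  · -- `q + 1 + x - 3y = p`
    exact absurd (by omega) hrp

/-- Theorem 3.6: if `(p₁, p₂, p₃, p₄)` is a proper elliptic list over `3` with
`p₁ = a² + 3b²`, `a ≡ 2 (mod 3)`, then `p₄ = (a + 2)² + 3b²`. -/
theorem stmt_11 (p₁ p₂ p₃ p₄ : ℕ)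
    (hp₁ : p₁.Prime) (hp₂ : p₂.Prime) (hp₃ : p₃.Prime) (hp₄ : p₄.Prime)
    (h₁3 : 3 < p₁) (h₂3 : 3 < p₂) (h₃3 : 3 < p₃) (h₄3 : 3 < p₄)
    (hdist : p₁ ≠ p₂ ∧ p₁ ≠ p₃ ∧ p₁ ≠ p₄ ∧ p₂ ≠ p₃ ∧ p₂ ≠ p₄ ∧ p₃ ≠ p₄)
    (h₁ : ∃ k : ZMod p₁, k ≠ 0 ∧ Npts p₁ k = p₂)
    (h₂ : ∃ k : ZMod p₂, k ≠ 0 ∧ Npts p₂ k = p₃)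
    (h₃ : ∃ k : ZMod p₃, k ≠ 0 ∧ Npts p₃ k = p₄)
    (a b : ℤ) (hab : (p₁ : ℤ) = a ^ 2 + 3 * b ^ 2) (ha : a % 3 = 2) :
    (p₄ : ℤ) = (a + 2) ^ 2 + 3 * b ^ 2 := by
  obtain ⟨-, h₁₃, -, -, h₂₄, -⟩ := hdist
  obtain ⟨b₁, hb₁, hp₁₂⟩ : ∃ b₁ : ℤ, b₁ ^ 2 = b ^ 2 ∧ (p₂ : ℤ) = p₁ + 1 + a + 3 * b₁ := by
    rcases IsEllipticPair.eq_add_or_eq_sub h₁ hp₁ hp₂ h₁3 h₂3 hab ha with h | h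
    · exact ⟨b, rfl, h⟩
    · exact ⟨-b, neg_sq b, by rw [h]; ring⟩
  have hab₁ : (p₁ : ℤ) = a ^ 2 + 3 * b₁ ^ 2 := hb₁ ▸ hab
  obtain ⟨x, y, hxy, hx, hx_def, hy_def, hp₂₃⟩ := IsEllipticPair.eq_add_of_ne h₂
    (hp₁.mod_two_eq_one_iff_ne_two.mpr (by omega)) hp₂ hp₃ h₂3 h₃3 (Ne.symm h₁₃) hab₁ ha hp₁₂
  obtain ⟨x', y', -, -, hx'_def, hy'_def, hp₃₄⟩ := IsEllipticPair.eq_add_of_ne h₃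
    (hp₂.mod_two_eq_one_iff_ne_two.mpr (by omega)) hp₃ hp₄ h₃3 h₄3 (Ne.symm h₂₄) hxy hx hp₂₃
  linarith
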